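/- arXiv:2511.19944 — 2 statements merged into one kernel-verified Lean document; each statement's English description precedes it below -/
import Mathlib

section
/- The topological entropy of a subshift of finite type defined by a 0-1 adjacency matrix A (assumed irreducible) equals the logarithm of the spectral radius of A. -/
/-!
For a 0-1 matrix `A` the admissible words of length `m + 1` are the paths of length `m` in the
graph of `A`, so `wordCount A m` is the sum of the entries of `A ^ m`. For a nonnegative `n × n`
matrix this sum lies between the `ℓ∞` operator norm of the matrix and `n` times it, hence
Gelfand's formula `‖A ^ m‖ ^ (1 / m) → ρ(A)` gives `wordCount A m ^ (1 / m) → ρ(A)`.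
Irreducibility provides a closed path, so no power of `A` vanishes and `wordCount A m ≥ 1`;
taking logarithms gives the entropy.
-/

open Matrix BigOperators Filter

def IsZeroOne {n : ℕ} (A : Matrix (Fin n) (Fin n) ℝ) : Prop :=
  ∀ i j, A i j = 0 ∨ A i j = 1

def IsIrreducibleMat {n : ℕ} (A : Matrix (Fin n) (Fin n) ℝ) : Prop :=
  ∀ i j, ∃ k : ℕ, 1 ≤ k ∧ 0 < (A ^ k) i j

/-- The spectral radius of a real matrix: the supremum of the absolute values of its
complex eigenvalues. -/
noncomputable def specRad {n : ℕ} (A : Matrix (Fin n) (Fin n) ℝ) : ℝ :=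
  sSup {r : ℝ | ∃ z : ℂ, z ∈ spectrum ℂ (A.map (algebraMap ℝ ℂ)) ∧ r = ‖z‖}

/-- Number of admissible words of length `m+1` in the subshift of finite type
determined by the 0-1 matrix `A`. -/
noncomputable def wordCount {n : ℕ} (A : Matrix (Fin n) (Fin n) ℝ) (m : ℕ) : ℕ :=
  Nat.card {w : Fin (m+1) → Fin n // ∀ k : Fin m, A (w k.castSucc) (w k.succ) = 1}

namespace Matrix

variable {ι R : Type*} [Fintype ι] [DecidableEq ι]

theorem sum_prod_mul_eq_sum_pow_mulVec [CommSemiring R] (A : Matrix ι ι R) (m : ℕ)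
    (g : ι → R) :
    ∑ w : Fin (m + 1) → ι, (∏ k : Fin m, A (w k.castSucc) (w k.succ)) * g (w (Fin.last m)) =
      ∑ i, (A ^ m *ᵥ g) i := by
  induction m generalizing g with
  | zero =>
    simp only [Finset.univ_eq_empty, Finset.prod_empty, one_mul, pow_zero, one_mulVec]
    exact (Equiv.funUnique (Fin 1) ι).sum_comp g
  | succ m ih =>
    rw [pow_succ, ← mulVec_mulVec, ← ih, ← (Fin.snocEquiv fun _ => ι).sum_comp,
      Fintype.sum_prod_type_right]
    refine Finset.sum_congr rfl fun v _ => ?_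
    simp only [Fin.snocEquiv_apply, Fin.prod_univ_castSucc, Fin.succ_castSucc, Fin.succ_last,
      Fin.snoc_castSucc, Fin.snoc_last, mulVec, dotProduct, Finset.mul_sum, mul_assoc]

theorem sum_sum_pow_apply_eq_sum_prod [CommSemiring R] (A : Matrix ι ι R) (m : ℕ) :
    ∑ i, ∑ j, (A ^ m) i j = ∑ w : Fin (m + 1) → ι, ∏ k : Fin m, A (w k.castSucc) (w k.succ) := by
  simpa [mulVec, dotProduct] using (sum_prod_mul_eq_sum_pow_mulVec A m 1).symm

theorem apply_self_pow_le_pow_apply_self [Semiring R] [PartialOrder R] [IsOrderedRing R]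
    {A : Matrix ι ι R} (hA : ∀ i j, 0 ≤ A i j) (i : ι) (m : ℕ) :
    A i i ^ m ≤ (A ^ m) i i := by
  induction m with
  | zero => simp
  | succ m ih =>
    rw [pow_succ, pow_succ, mul_apply]
    calc A i i ^ m * A i i ≤ (A ^ m) i i * A i i := mul_le_mul_of_nonneg_right ih (hA i i)
      _ ≤ ∑ l, (A ^ m) i l * A l i :=
        Finset.single_le_sum (fun l _ => mul_nonneg (pow_apply_nonneg hA m i l) (hA l i))
          (Finset.mem_univ i)

theorem pow_ne_zero_of_pow_apply_self_pos [Semiring R] [PartialOrder R] [IsStrictOrderedRing R]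
    {A : Matrix ι ι R} (hA : ∀ i j, 0 ≤ A i j) {i : ι} {k : ℕ} (hk : 1 ≤ k)
    (hpos : 0 < (A ^ k) i i) (m : ℕ) : A ^ m ≠ 0 := by
  intro hm
  have hkm : (A ^ k) ^ m = 0 := by
    rw [← pow_mul]
    exact pow_eq_zero_of_le (Nat.le_mul_of_pos_left m hk) hm
  have := (pow_pos hpos m).trans_le (apply_self_pow_le_pow_apply_self (pow_apply_nonneg hA k) i m)
  simp [hkm] at this

end Matrix

theorem tendsto_rpow_one_div_of_le_of_le_const_mul {a b : ℕ → ℝ} {ρ c : ℝ} (hc : 0 < c)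
    (ha : ∀ m, 0 ≤ a m) (hab : ∀ m, a m ≤ b m) (hbc : ∀ m, b m ≤ c * a m)
    (hlim : Tendsto (fun m : ℕ => a m ^ (1 / (m : ℝ))) atTop (nhds ρ)) :
    Tendsto (fun m : ℕ => b m ^ (1 / (m : ℝ))) atTop (nhds ρ) := by
  have hc1 : Tendsto (fun m : ℕ => c ^ (1 / (m : ℝ))) atTop (nhds 1) := by
    simpa [Function.comp_def] using (Real.continuousAt_const_rpow hc.ne').tendsto.comp
      tendsto_one_div_atTop_nhds_zero_nat
  have hupper : Tendsto (fun m : ℕ => c ^ (1 / (m : ℝ)) * a m ^ (1 / (m : ℝ))) atTop (nhds ρ) := by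
    simpa using hc1.mul hlim
  refine tendsto_of_tendsto_of_tendsto_of_le_of_le hlim hupper
    (fun m => Real.rpow_le_rpow (ha m) (hab m) (by positivity)) (fun m => ?_)
  rw [← Real.mul_rpow hc.le (ha m)]
  exact Real.rpow_le_rpow ((ha m).trans (hab m)) (hbc m) (by positivity)

theorem tendsto_log_div_add_one_of_tendsto_rpow {b : ℕ → ℝ} {ρ : ℝ} (hb : ∀ m, 1 ≤ b m)
    (hlim : Tendsto (fun m : ℕ => b m ^ (1 / (m : ℝ))) atTop (nhds ρ)) :
    Tendsto (fun m : ℕ => Real.log (b m) / (m + 1 : ℝ)) atTop (nhds (Real.log ρ)) := by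
  have hρ : 1 ≤ ρ := ge_of_tendsto' hlim fun m => Real.one_le_rpow (hb m) (by positivity)
  have hlog : Tendsto (fun m : ℕ => Real.log (b m) / m) atTop (nhds (Real.log ρ)) := by
    refine (hlim.log (by positivity)).congr fun m => ?_
    rw [Real.log_rpow (by linarith [hb m]), one_div_mul_eq_div]
  have h := hlog.mul (tendsto_natCast_div_add_atTop (1 : ℝ))
  rw [mul_one] at h
  refine h.congr' ?_
  filter_upwards [eventually_ne_atTop 0] with m hm
  field_simp

section SubshiftOfFiniteType

variable {n : ℕ}

theorem IsZeroOne.nonneg {A : Matrix (Fin n) (Fin n) ℝ} (h01 : IsZeroOne A) (i j : Fin n) :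
    0 ≤ A i j := by
  rcases h01 i j with h | h <;> simp [h]

theorem wordCount_eq_sum_sum_pow_apply {A : Matrix (Fin n) (Fin n) ℝ} (h01 : IsZeroOne A)
    (m : ℕ) : (wordCount A m : ℝ) = ∑ i, ∑ j, (A ^ m) i j := by
  have hA : ∀ i j, A i j = if A i j = 1 then 1 else 0 := fun i j => by
    rcases h01 i j with h | h <;> simp [h]
  rw [sum_sum_pow_apply_eq_sum_prod, wordCount, Nat.card_eq_fintype_card, Fintype.card_subtype,
    Finset.card_filter]
  push_cast
  refine Finset.sum_congr rfl fun w _ => ?_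
  rw [Finset.prod_congr rfl fun k _ => hA _ _, Fintype.prod_boole]
  congr

theorem one_le_wordCount {A : Matrix (Fin n) (Fin n) ℝ} (h01 : IsZeroOne A)
    (hirr : IsIrreducibleMat A) [NeZero n] (m : ℕ) : 1 ≤ wordCount A m := by
  obtain ⟨k, hk, hpos⟩ := hirr 0 0
  rw [Nat.one_le_iff_ne_zero]
  intro hzero
  have hsum : ∑ i, ∑ j, (A ^ m) i j = 0 := by
    rw [← wordCount_eq_sum_sum_pow_apply h01, hzero, Nat.cast_zero]
  refine pow_ne_zero_of_pow_apply_self_pos h01.nonneg hk hpos m (Matrix.ext fun i j => ?_)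
  have hnonneg := pow_apply_nonneg h01.nonneg m
  rw [Fintype.sum_eq_zero_iff_of_nonneg fun i => Finset.sum_nonneg fun j _ => hnonneg i j] at hsum
  exact congrFun ((Fintype.sum_eq_zero_iff_of_nonneg (hnonneg i)).mp (congrFun hsum i)) j

theorem specRad_nonneg (A : Matrix (Fin n) (Fin n) ℝ) : 0 ≤ specRad A :=
  Real.sSup_nonneg fun _ ⟨_, _, hr⟩ => hr ▸ norm_nonneg _

theorem wordCount_fin_zero (A : Matrix (Fin 0) (Fin 0) ℝ) (m : ℕ) : wordCount A m = 0 := by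
  simp [wordCount]

theorem specRad_fin_zero (A : Matrix (Fin 0) (Fin 0) ℝ) : specRad A = 0 := by
  simp [specRad, spectrum.of_subsingleton]

section LinftyOpNorm

-- Gelfand's formula holds for any algebra norm; the `ℓ∞` operator norm is the one that is
-- comparable to the sum of the entries.
attribute [local instance] Matrix.linftyOpSeminormedAddCommGroup Matrix.linftyOpNormedRing
  Matrix.linftyOpNormedAlgebra

namespace Matrix

variable {ι κ α : Type*} [Fintype ι] [Fintype κ] [SeminormedAddCommGroup α]

theorem sum_norm_le_linfty_opNorm (M : Matrix ι κ α) (i : ι) : ∑ j, ‖M i j‖ ≤ ‖M‖ := by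
  have h := Finset.le_sup (f := fun i => ∑ j, ‖M i j‖₊) (Finset.mem_univ i)
  rw [← linfty_opNNNorm_def] at h
  simpa only [← NNReal.coe_le_coe, NNReal.coe_sum, coe_nnnorm] using h

theorem linfty_opNorm_le_sum_sum_norm (M : Matrix ι κ α) : ‖M‖ ≤ ∑ i, ∑ j, ‖M i j‖ := by
  have h : ‖M‖₊ ≤ ∑ i, ∑ j, ‖M i j‖₊ := by
    rw [linfty_opNNNorm_def]
    exact Finset.sup_le fun i _ =>
      Finset.single_le_sum (f := fun i => ∑ j, ‖M i j‖₊) (fun _ _ => zero_le) (Finset.mem_univ i)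
  simpa only [← NNReal.coe_le_coe, NNReal.coe_sum, coe_nnnorm] using h

theorem sum_sum_norm_le_card_mul_linfty_opNorm (M : Matrix ι κ α) :
    ∑ i, ∑ j, ‖M i j‖ ≤ Fintype.card ι * ‖M‖ := by
  simpa using Finset.sum_le_card_nsmul Finset.univ _ _ fun i _ => sum_norm_le_linfty_opNorm M i

end Matrix

theorem ofReal_specRad [NeZero n] (A : Matrix (Fin n) (Fin n) ℝ) :
    ENNReal.ofReal (specRad A) = spectralRadius ℂ (A.map (algebraMap ℝ ℂ)) := by
  obtain ⟨z, hz, hρ⟩ := spectrum.exists_nnnorm_eq_spectralRadius (A.map (algebraMap ℝ ℂ))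
  have hmax : IsGreatest {r : ℝ | ∃ z : ℂ, z ∈ spectrum ℂ (A.map (algebraMap ℝ ℂ)) ∧ r = ‖z‖}
      ‖z‖ := by
    refine ⟨⟨z, hz, rfl⟩, ?_⟩
    rintro _ ⟨w, hw, rfl⟩
    have : (‖w‖₊ : ENNReal) ≤ ‖z‖₊ := hρ ▸ le_iSup₂ (f := fun k (_ : k ∈ spectrum ℂ _) =>
      (‖k‖₊ : ENNReal)) w hw
    exact_mod_cast this
  rw [specRad, hmax.csSup_eq, ← hρ, ofReal_norm]
  rfl

theorem tendsto_norm_pow_rpow_specRad [NeZero n] (A : Matrix (Fin n) (Fin n) ℝ) :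
    Tendsto (fun m : ℕ => ‖A.map (algebraMap ℝ ℂ) ^ m‖ ^ (1 / (m : ℝ))) atTop
      (nhds (specRad A)) := by
  have h := spectrum.pow_norm_pow_one_div_tendsto_nhds_spectralRadius (A.map (algebraMap ℝ ℂ))
  rw [← ofReal_specRad] at h
  have h' := (ENNReal.tendsto_toReal ENNReal.ofReal_ne_top).comp h
  rw [ENNReal.toReal_ofReal (specRad_nonneg A)] at h'
  exact h'.congr fun m => ENNReal.toReal_ofReal (by positivity)

theorem wordCount_eq_sum_sum_norm_pow_map {A : Matrix (Fin n) (Fin n) ℝ} (h01 : IsZeroOne A)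
    (m : ℕ) :
    (wordCount A m : ℝ) = ∑ i, ∑ j, ‖(A.map (algebraMap ℝ ℂ) ^ m) i j‖ := by
  have hpow : A.map (algebraMap ℝ ℂ) ^ m = (A ^ m).map (algebraMap ℝ ℂ) :=
    (map_pow (algebraMap ℝ ℂ).mapMatrix A m).symm
  rw [wordCount_eq_sum_sum_pow_apply h01, hpow]
  refine Finset.sum_congr rfl fun i _ => Finset.sum_congr rfl fun j _ => ?_
  rw [map_apply, Complex.coe_algebraMap, Complex.norm_real,
    Real.norm_of_nonneg (pow_apply_nonneg h01.nonneg m i j)]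

theorem tendsto_wordCount_rpow_specRad [NeZero n] {A : Matrix (Fin n) (Fin n) ℝ}
    (h01 : IsZeroOne A) :
    Tendsto (fun m : ℕ => (wordCount A m : ℝ) ^ (1 / (m : ℝ))) atTop (nhds (specRad A)) := by
  refine tendsto_rpow_one_div_of_le_of_le_const_mul (c := n) (Nat.cast_pos.mpr (NeZero.pos n))
    (fun m => norm_nonneg _) (fun m => ?_) (fun m => ?_) (tendsto_norm_pow_rpow_specRad A)
  · rw [wordCount_eq_sum_sum_norm_pow_map h01]
    exact linfty_opNorm_le_sum_sum_norm _
  · rw [wordCount_eq_sum_sum_norm_pow_map h01]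
    simpa using sum_sum_norm_le_card_mul_linfty_opNorm (A.map (algebraMap ℝ ℂ) ^ m)

end LinftyOpNorm

end SubshiftOfFiniteType

/-- The topological entropy of the subshift of finite type of an irreducible 0-1
matrix `A` (exponential growth rate of admissible words) equals `log (specRad A)`. -/
theorem sft_topological_entropy_eq_log_spectral_radius {n : ℕ}
    (A : Matrix (Fin n) (Fin n) ℝ)
    (h01 : IsZeroOne A) (hirr : IsIrreducibleMat A) :
    Tendsto (fun m : ℕ => Real.log (wordCount A m) / (m + 1 : ℝ)) atTop
      (nhds (Real.log (specRad A))) := by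
  rcases n.eq_zero_or_pos with rfl | hn
  -- no words and an empty spectrum: both sides are `Real.log 0 = 0`
  · simp [wordCount_fin_zero, specRad_fin_zero]
  have : NeZero n := ⟨hn.ne'⟩
  exact tendsto_log_div_add_one_of_tendsto_rpow
    (fun m => by exact_mod_cast one_le_wordCount h01 hirr m) (tendsto_wordCount_rpow_specRad h01)
end

section
/- The adjacency matrix of the directed graph with vertices {v1, v2, v3, v4} and edges v4→v1, v1→v2, v1→v3, v2→v3, v3→v4, v3→v1 has spectral radius strictly greater than the spectral radius of the 3-vertex graph with edges v1→v2, v1→v3, v2→v3, v3→v1; hence the topological entropy of the associated subshift strictly increases when the new vertex and edges are added. -/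
open Matrix BigOperators

/-- Adjacency matrix of the primitive Leviathan graph: edges
v1→v2, v1→v3, v2→v3, v3→v1. -/
def leviathan3 : Matrix (Fin 3) (Fin 3) ℝ := !![0, 1, 1; 0, 0, 1; 1, 0, 0]

/-- Adjacency matrix of the advanced Leviathan graph: edges
v4→v1, v1→v2, v1→v3, v2→v3, v3→v4, v3→v1. -/
def leviathan4 : Matrix (Fin 4) (Fin 4) ℝ :=
  !![0, 1, 1, 0; 0, 0, 1, 0; 1, 0, 0, 1; 1, 0, 0, 0]

lemma spec3_iff (z : ℂ) :
    z ∈ spectrum ℂ (leviathan3.map (algebraMap ℝ ℂ)) ↔ z^3 - z - 1 = 0 := by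
  rw [spectrum.mem_iff, Matrix.isUnit_iff_isUnit_det, isUnit_iff_ne_zero, not_not]
  have h : (algebraMap ℂ (Matrix (Fin 3) (Fin 3) ℂ)) z - leviathan3.map (algebraMap ℝ ℂ)
      = !![z, -1, -1; 0, z, -1; -1, 0, z] := by
    ext i j
    fin_cases i <;> fin_cases j <;>
      simp [leviathan3, Matrix.algebraMap_matrix_apply, Matrix.map_apply,
        Matrix.vecHead, Matrix.vecTail]
  rw [h]
  have hd : (!![z, -1, -1; 0, z, -1; -1, 0, z]).det = z^3 - z - 1 := by
    simp [Matrix.det_fin_three]; ring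
  rw [hd]

lemma spec4_iff (z : ℂ) :
    z ∈ spectrum ℂ (leviathan4.map (algebraMap ℝ ℂ)) ↔ z^4 - z^2 - 2*z - 1 = 0 := by
  rw [spectrum.mem_iff, Matrix.isUnit_iff_isUnit_det, isUnit_iff_ne_zero, not_not]
  have h : (algebraMap ℂ (Matrix (Fin 4) (Fin 4) ℂ)) z - leviathan4.map (algebraMap ℝ ℂ)
      = !![z, -1, -1, 0; 0, z, -1, 0; -1, 0, z, -1; -1, 0, 0, z] := by
    ext i j
    fin_cases i <;> fin_cases j <;>
      simp [leviathan4, Matrix.algebraMap_matrix_apply, Matrix.map_apply,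
        Matrix.vecHead, Matrix.vecTail]
  rw [h]
  have hd : (!![z, -1, -1, 0; 0, z, -1, 0; -1, 0, z, -1; -1, 0, 0, z]).det
      = z^4 - z^2 - 2*z - 1 := by
    simp [Matrix.det_succ_row_zero, Fin.sum_univ_succ, Matrix.det_fin_three]
    simp [Fin.succAbove, Fin.lt_def]
    ring
  rw [hd]

/-- Adding the new vertex and edges strictly increases the spectral radius, hence the
topological entropy `log ∘ specRad` of the associated subshift strictly increases. -/
theorem leviathan4_specRad_gt_leviathan3 :
    specRad leviathan3 < specRad leviathan4 ∧
    Real.log (specRad leviathan3) < Real.log (specRad leviathan4) := by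
  set S3 := {r : ℝ | ∃ z : ℂ, z ∈ spectrum ℂ (leviathan3.map (algebraMap ℝ ℂ)) ∧
    r = ‖z‖} with hS3
  set S4 := {r : ℝ | ∃ z : ℂ, z ∈ spectrum ℂ (leviathan4.map (algebraMap ℝ ℂ)) ∧
    r = ‖z‖} with hS4
  -- a real root of t^3 - t - 1 in [1,2]
  obtain ⟨r3, hr3mem, hr3⟩ : ∃ r ∈ Set.Icc (1:ℝ) 2, r^3 - r - 1 = 0 := by
    have hc : ContinuousOn (fun t : ℝ => t^3 - t - 1) (Set.Icc 1 2) := by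
      fun_prop
    have := intermediate_value_Icc (by norm_num : (1:ℝ) ≤ 2) hc
    have h0 : (0:ℝ) ∈ Set.Icc ((1:ℝ)^3 - 1 - 1) ((2:ℝ)^3 - 2 - 1) := by norm_num
    obtain ⟨r, hr, hr0⟩ := this h0
    exact ⟨r, hr, hr0⟩
  -- a real root of t^4 - t^2 - 2t - 1 in [1.4, 2]
  obtain ⟨r4, hr4mem, hr4⟩ : ∃ r ∈ Set.Icc (1.4:ℝ) 2, r^4 - r^2 - 2*r - 1 = 0 := by
    have hc : ContinuousOn (fun t : ℝ => t^4 - t^2 - 2*t - 1) (Set.Icc 1.4 2) := by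
      fun_prop
    have := intermediate_value_Icc (by norm_num : (1.4:ℝ) ≤ 2) hc
    have h0 : (0:ℝ) ∈ Set.Icc ((1.4:ℝ)^4 - (1.4:ℝ)^2 - 2*1.4 - 1)
        ((2:ℝ)^4 - (2:ℝ)^2 - 2*2 - 1) := by norm_num
    obtain ⟨r, hr, hr0⟩ := this h0
    exact ⟨r, hr, hr0⟩
  have hr4gt : (1.4:ℝ) < r4 := by
    rcases lt_or_eq_of_le hr4mem.1 with h | h
    · exact h
    · exfalso; rw [← h] at hr4; norm_num at hr4
  -- membership facts
  have hr3S : r3 ∈ S3 := by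
    refine ⟨(r3 : ℂ), (spec3_iff _).mpr ?_, ?_⟩
    · exact_mod_cast congrArg (fun t : ℝ => (t : ℂ)) hr3
    · rw [Complex.norm_real, Real.norm_eq_abs, abs_of_nonneg (by linarith [hr3mem.1])]
  have hr4S : r4 ∈ S4 := by
    refine ⟨(r4 : ℂ), (spec4_iff _).mpr ?_, ?_⟩
    · exact_mod_cast congrArg (fun t : ℝ => (t : ℂ)) hr4
    · rw [Complex.norm_real, Real.norm_eq_abs, abs_of_nonneg (by linarith [hr4mem.1])]
  -- S3 is bounded above by 1.4
  have hS3bdd : ∀ r ∈ S3, r ≤ 1.4 := by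
    rintro r ⟨z, hz, rfl⟩
    rw [spec3_iff] at hz
    have hz' : z^3 = z + 1 := by linear_combination hz
    have habs : (‖z‖)^3 ≤ ‖z‖ + 1 := by
      calc (‖z‖)^3 = ‖z^3‖ := by rw [norm_pow]
        _ = ‖z + 1‖ := by rw [hz']
        _ ≤ ‖z‖ + ‖(1:ℂ)‖ := norm_add_le z 1
        _ = ‖z‖ + 1 := by simp
    by_contra h
    push_neg at h
    have ht : (0:ℝ) < ‖z‖ := by linarith
    nlinarith [mul_pos (sub_pos.mpr h) (mul_pos ht ht), mul_pos (sub_pos.mpr h) ht]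
  -- S4 is bounded above by 2
  have hS4bdd : ∀ r ∈ S4, r ≤ 2 := by
    rintro r ⟨z, hz, rfl⟩
    rw [spec4_iff] at hz
    have hz' : z^4 = z^2 + 2*z + 1 := by linear_combination hz
    have habs : (‖z‖)^4 ≤ (‖z‖)^2 + 2*(‖z‖) + 1 := by
      calc (‖z‖)^4 = ‖z^4‖ := by rw [norm_pow]
        _ = ‖z^2 + 2*z + 1‖ := by rw [hz']
        _ ≤ ‖z^2 + 2*z‖ + ‖(1:ℂ)‖ := norm_add_le _ 1
        _ ≤ ‖z^2‖ + ‖2*z‖ + ‖(1:ℂ)‖ :=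
            by linarith [norm_add_le (z^2) (2*z)]
        _ = (‖z‖)^2 + 2*(‖z‖) + 1 := by
            rw [norm_pow, norm_mul]; simp
    by_contra h
    push_neg at h
    have ht : (0:ℝ) < ‖z‖ := by linarith
    nlinarith [mul_pos (sub_pos.mpr h) (mul_pos ht (mul_pos ht ht)),
      mul_pos (sub_pos.mpr h) (mul_pos ht ht), mul_pos (sub_pos.mpr h) ht]
  have h3le : specRad leviathan3 ≤ 1.4 :=
    csSup_le ⟨r3, hr3S⟩ hS3bdd
  have h4ge : r4 ≤ specRad leviathan4 :=
    le_csSup ⟨2, hS4bdd⟩ hr4S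
  have h3ge : r3 ≤ specRad leviathan3 :=
    le_csSup ⟨1.4, hS3bdd⟩ hr3S
  have hmain : specRad leviathan3 < specRad leviathan4 := by
    calc specRad leviathan3 ≤ 1.4 := h3le
      _ < r4 := hr4gt
      _ ≤ specRad leviathan4 := h4ge
  have hpos : 0 < specRad leviathan3 := by linarith [hr3mem.1]
  exact ⟨hmain, Real.log_lt_log hpos hmain⟩
end
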